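/- Let n ≥ 1 and let f ∈ ℂ[[z_1,…,z_n]] be a formal power series of order m ≥ 2 in which the monomial z_1^m occurs with nonzero coefficient. Let φ_1,…,φ_n ∈ ℂ[[t]] have zero constant term with f(φ_1,…,φ_n) = 0, and let ψ_1 ∈ ℂ[[t]] be nonzero with zero constant term, of order d. Define F(t,s) := f(φ_1(t) + s·t^{d+1}, φ_2(t), …, φ_n(t)) ∈ ℂ[[t,s]]. Then F is not identically zero, F is divisible by t^{d+1}, F(t,0) = 0, and there exists Ψ_2 ∈ ℂ[[t,s]] divisible by t with Ψ_2(t,0) = 0 such that ψ_1(t)·Ψ_2(t,s) = F(t,s). -/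

import Mathlib

/-- `ℂ[[t,s]]`, viewed as power series in `t` whose coefficients are
power series in `s`. -/
abbrev CTS : Type := PowerSeries (PowerSeries ℂ)

/-- Substitution of power series `g j ∈ S[[t]]` (each of which is assumed,
for this definition to be the true substitution, to have zero constant
term in `t`) into `f ∈ ℂ[[z_0,…,z_n]]`, defined coefficientwise:
the coefficient of `t^k` in `f(g)` is the (finite) sum, over the
multi-exponents `d` with `d j ≤ k` for all `j`, of
`(coeff d f) • coeff_k (∏ j, (g j)^(d j))`.  (Exponents `d` of total degree
`> k` contribute `0` since each `g j` is divisible by `t`.) -/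
noncomputable def substArc {n : ℕ} {S : Type} [CommRing S] [Algebra ℂ S]
    (g : Fin (n + 1) → PowerSeries S) (f : MvPowerSeries (Fin (n + 1)) ℂ) :
    PowerSeries S :=
  PowerSeries.mk fun k =>
    ∑ d ∈ Finset.Iic (Finsupp.equivFunOnFinite.symm fun _ : Fin (n + 1) => k),
      MvPowerSeries.coeff d f • PowerSeries.coeff k (∏ j, g j ^ d j)

/-- The image of `φ(t) ∈ ℂ[[t]]` in `ℂ[[t,s]]`. -/
noncomputable def embT (φ : PowerSeries ℂ) : CTS :=
  PowerSeries.map PowerSeries.C φ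

/-- The variable `s` as an element of `ℂ[[t,s]]`. -/
noncomputable def sVar : CTS := PowerSeries.C PowerSeries.X

/-- The substitution `F(t,s) = f(φ_0(t) + w, φ_1(t), …, φ_n(t)) ∈ ℂ[[t,s]]`,
where `w ∈ ℂ[[t,s]]` is the perturbation added to the first coordinate. -/
noncomputable def deformSubst {n : ℕ} (φ : Fin (n + 1) → PowerSeries ℂ)
    (w : CTS) (f : MvPowerSeries (Fin (n + 1)) ℂ) : CTS :=
  substArc (fun j => if j = 0 then embT (φ 0) + w else embT (φ j)) f

/-! Write `F = f(φ₀ + s t^(d+1), φ₁, …, φₙ)`. Setting `s = 0` gives back `f(φ) = 0`, and since the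
perturbation is divisible by `t^(d+1)`, also `F ≡ f(φ) = 0` modulo `t^(d+1)`. So `F = t^(d+1) K`
with `K(t,0) = 0`, and as `ψ₁ = t^d u` with `u` a unit, `Ψ₂ = u⁻¹ t K` works.

`F ≠ 0` because its coefficient of `s^m t^(m(d+1))` is the coefficient of `z₀^m` in `f`: as the
`φⱼ` are divisible by `t`, a monomial `z^e` reaches `s^m t^(m(d+1))` only through `(s t^(d+1))^m`,
that is, only for `z^e = z₀^m`. -/

open PowerSeries

theorem Finsupp.eq_single_zero_iff {n : ℕ} {M : Type*} [Zero M] {m : M} {e : Fin (n + 1) →₀ M} :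
    e = Finsupp.single 0 m ↔ e 0 = m ∧ ∀ j : Fin n, e j.succ = 0 := by
  simp [Finsupp.ext_iff, Fin.forall_fin_succ, Finsupp.single_eq_of_ne, Fin.succ_ne_zero]

section Substitution

variable {n : ℕ} {S : Type} [CommRing S] [Algebra ℂ S]

theorem map_substArc {S' : Type} [CommRing S'] [Algebra ℂ S'] (ρ : S →+* S')
    (hρ : ∀ (c : ℂ) (x : S), ρ (c • x) = c • ρ x)
    (g : Fin (n + 1) → S⟦X⟧) (f : MvPowerSeries (Fin (n + 1)) ℂ) :
    map ρ (substArc g f) = substArc (fun j => map ρ (g j)) f := by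
  ext k
  simp only [substArc, coeff_map, coeff_mk, map_sum, hρ, ← map_pow, ← map_prod]

theorem X_pow_dvd_substArc_sub {N : ℕ} {g g' : Fin (n + 1) → S⟦X⟧}
    (h : ∀ j, (X : S⟦X⟧) ^ N ∣ g j - g' j) (f : MvPowerSeries (Fin (n + 1)) ℂ) :
    (X : S⟦X⟧) ^ N ∣ substArc g f - substArc g' f := by
  have hprod (e : Fin (n + 1) →₀ ℕ) : (X : S⟦X⟧) ^ N ∣ ∏ j, g j ^ e j - ∏ j, g' j ^ e j := by
    simp only [← Ideal.mem_span_singleton, ← Ideal.Quotient.mk_eq_mk_iff_sub_mem, map_prod,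
      map_pow] at h ⊢
    simp only [h]
  refine X_pow_dvd_iff.mpr fun k hk => ?_
  rw [map_sub, sub_eq_zero]
  simp only [substArc, coeff_mk]
  refine Finset.sum_congr rfl fun e _ => ?_
  have hcoeff := X_pow_dvd_iff.mp (hprod e) k hk
  rw [map_sub, sub_eq_zero] at hcoeff
  rw [hcoeff]

end Substitution

section Deformation

variable {n : ℕ}

theorem map_constantCoeff_embT (p : ℂ⟦X⟧) : map constantCoeff (embT p) = p := by
  ext k
  simp [embT]

theorem substArc_embT (φ : Fin (n + 1) → ℂ⟦X⟧) (f : MvPowerSeries (Fin (n + 1)) ℂ) :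
    substArc (fun j => embT (φ j)) f = embT (substArc φ f) := by
  rw [embT, map_substArc (S := ℂ) C (fun c x => by rw [smul_eq_mul, map_mul, smul_eq_C_mul])]
  rfl

theorem map_constantCoeff_sVar : map constantCoeff sVar = 0 := by
  rw [sVar, map_C, constantCoeff_X, map_zero]

theorem map_constantCoeff_deformSubst {w : CTS} (hw : map constantCoeff w = 0)
    (φ : Fin (n + 1) → ℂ⟦X⟧) (f : MvPowerSeries (Fin (n + 1)) ℂ) :
    map constantCoeff (deformSubst φ w f) = substArc φ f := by
  rw [deformSubst, map_substArc (constantCoeff : ℂ⟦X⟧ →+* ℂ)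
    (fun c x => by rw [smul_eq_C_mul, map_mul, constantCoeff_C, smul_eq_mul])]
  congr 1
  funext j
  split_ifs with hj
  · rw [map_add, hw, add_zero, map_constantCoeff_embT, hj]
  · exact map_constantCoeff_embT (φ j)

theorem X_pow_dvd_deformSubst_sub {N : ℕ} {w : CTS} (hw : X ^ N ∣ w)
    (φ : Fin (n + 1) → ℂ⟦X⟧) (f : MvPowerSeries (Fin (n + 1)) ℂ) :
    X ^ N ∣ deformSubst φ w f - embT (substArc φ f) := by
  rw [← substArc_embT]
  refine X_pow_dvd_substArc_sub (fun j => ?_) f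
  split_ifs with hj
  · rwa [hj, add_sub_cancel_left]
  · rw [sub_self]
    exact dvd_zero _

theorem coeff_coeff_sVar_pow_mul_X_pow_mul_embT (a b i j : ℕ) (p : ℂ⟦X⟧) :
    coeff a (coeff b (sVar ^ i * X ^ j * embT p)) =
      if a = i ∧ j ≤ b then coeff (b - j) p else 0 := by
  rw [sVar, ← map_pow, mul_assoc, coeff_C_mul, coeff_X_pow_mul' (embT p), embT]
  by_cases hj : j ≤ b
  · rw [if_pos hj, coeff_map, mul_comm, coeff_C_mul_X_pow]
    simp only [hj, and_true]
  · simp [hj]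

theorem prod_deform_pow_eq (φ : Fin (n + 1) → ℂ⟦X⟧) (w : CTS) (e : Fin (n + 1) →₀ ℕ) :
    ∏ j, (if j = 0 then embT (φ 0) + w else embT (φ j)) ^ e j =
      (w + embT (φ 0)) ^ e 0 * embT (∏ j : Fin n, φ j.succ ^ e j.succ) := by
  simp only [Fin.prod_univ_succ, embT, map_prod, map_pow, if_pos, Fin.succ_ne_zero, if_false,
    add_comm w]

theorem constantCoeff_choose_mul_pow_mul_prod {φ : Fin (n + 1) → ℂ⟦X⟧}
    (hφ : ∀ j, constantCoeff (φ j) = 0) (m : ℕ) (e : Fin (n + 1) →₀ ℕ) :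
    constantCoeff (((e 0).choose m : ℂ⟦X⟧) * φ 0 ^ (e 0 - m) * ∏ j : Fin n, φ j.succ ^ e j.succ)
      = if e = Finsupp.single 0 m then 1 else 0 := by
  simp only [map_mul, map_natCast, map_pow, map_prod, hφ]
  split_ifs with he
  · obtain ⟨h0, hsucc⟩ := Finsupp.eq_single_zero_iff.mp he
    simp [h0, hsucc]
  · rcases lt_trichotomy (e 0) m with hlt | heq | hgt
    · simp [Nat.choose_eq_zero_of_lt hlt]
    · obtain ⟨j, hj⟩ : ∃ j : Fin n, e j.succ ≠ 0 := by
        by_contra! h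
        exact he (Finsupp.eq_single_zero_iff.mpr ⟨heq, h⟩)
      rw [Finset.prod_eq_zero (Finset.mem_univ j) (zero_pow hj), mul_zero]
    · rw [zero_pow (by omega), mul_zero, zero_mul]

theorem coeff_coeff_prod_deform_pow {φ : Fin (n + 1) → ℂ⟦X⟧}
    (hφ : ∀ j, constantCoeff (φ j) = 0) (d m : ℕ) (e : Fin (n + 1) →₀ ℕ) :
    coeff m (coeff (m * (d + 1))
      (∏ j, (if j = 0 then embT (φ 0) + sVar * X ^ (d + 1) else embT (φ j)) ^ e j))
      = if e = Finsupp.single 0 m then 1 else 0 := by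
  have hterm (i : ℕ) (Q : ℂ⟦X⟧) :
      (sVar * X ^ (d + 1)) ^ i * embT (φ 0) ^ (e 0 - i) * ((e 0).choose i : CTS) * embT Q =
        sVar ^ i * X ^ ((d + 1) * i) * embT ((e 0).choose i * φ 0 ^ (e 0 - i) * Q) := by
    simp only [embT, map_mul, map_pow, map_natCast]
    ring
  -- In the binomial expansion of the first factor only the term `(s t^(d+1))^m` contributes.
  rw [prod_deform_pow_eq, add_pow, Finset.sum_mul, map_sum, map_sum]
  simp only [hterm, coeff_coeff_sVar_pow_mul_X_pow_mul_embT]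
  rw [Finset.sum_eq_single m (fun i _ hi => if_neg fun h => hi h.1.symm), if_pos
    ⟨rfl, (mul_comm _ _).le⟩, Nat.sub_eq_zero_of_le (mul_comm _ _).le, coeff_zero_eq_constantCoeff,
    constantCoeff_choose_mul_pow_mul_prod hφ]
  intro hm
  rw [Nat.choose_eq_zero_of_lt (by simpa using hm)]
  simp

theorem coeff_coeff_deformSubst {φ : Fin (n + 1) → ℂ⟦X⟧}
    (hφ : ∀ j, constantCoeff (φ j) = 0) (d m : ℕ) (f : MvPowerSeries (Fin (n + 1)) ℂ) :
    coeff m (coeff (m * (d + 1)) (deformSubst φ (sVar * X ^ (d + 1)) f))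
      = MvPowerSeries.coeff (Finsupp.single 0 m) f := by
  simp only [deformSubst, substArc, coeff_mk, map_sum, map_smul, coeff_coeff_prod_deform_pow hφ,
    smul_eq_mul, mul_ite, mul_one, mul_zero, Finset.sum_ite_eq']
  refine if_pos (Finset.mem_Iic.mpr fun j => ?_)
  simp only [Finsupp.single_apply, Finsupp.coe_equivFunOnFinite_symm]
  split_ifs
  · exact Nat.le_mul_of_pos_right m (Nat.succ_pos d)
  · exact Nat.zero_le _

theorem exists_embT_mul_eq {ψ : ℂ⟦X⟧} {d : ℕ} (hψ : ψ.order = d) {F : CTS}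
    (hF : X ^ (d + 1) ∣ F) (hF₀ : map constantCoeff F = 0) :
    ∃ Ψ : CTS, X ∣ Ψ ∧ map constantCoeff Ψ = 0 ∧ embT ψ * Ψ = F := by
  obtain ⟨K, rfl⟩ := hF
  have hK₀ : map constantCoeff K = 0 := by
    rw [map_mul, map_pow, map_X] at hF₀
    exact (mul_eq_zero.mp hF₀).resolve_left (pow_ne_zero _ X_ne_zero)
  have hψ₀ : ψ ≠ 0 := by
    rintro rfl
    simp at hψ
  obtain ⟨u, hu⟩ := isUnit_divided_by_X_pow_order hψ₀
  have hψu : ψ = X ^ d * (u : ℂ⟦X⟧) := by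
    rw [hu, ← ENat.toNat_natCast d, ← hψ, X_pow_order_mul_divXPowOrder]
  refine ⟨embT ↑u⁻¹ * X * K, dvd_mul_of_dvd_left (dvd_mul_left _ _) _, ?_, ?_⟩
  · rw [map_mul, hK₀, mul_zero]
  · have hunit : embT ↑u * embT ↑u⁻¹ = 1 := by
      unfold embT
      rw [← map_mul, Units.mul_inv, map_one]
    calc embT ψ * (embT ↑u⁻¹ * X * K) = X ^ (d + 1) * K * (embT ↑u * embT ↑u⁻¹) := by
          rw [hψu]
          simp only [embT, map_mul, map_pow, map_X]
          ring
      _ = X ^ (d + 1) * K := by rw [hunit, mul_one]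

end Deformation

theorem stmt6_general (n : ℕ) (f : MvPowerSeries (Fin (n + 1)) ℂ) (m : ℕ)
    (hz : MvPowerSeries.coeff (Finsupp.single 0 m) f ≠ 0)
    (φ : Fin (n + 1) → PowerSeries ℂ)
    (hφ : ∀ j, PowerSeries.constantCoeff (φ j) = 0)
    (hfφ : substArc φ f = 0)
    (ψ₁ : PowerSeries ℂ)
    (d : ℕ) (hd : ψ₁.order = d) :
    deformSubst φ (sVar * PowerSeries.X ^ (d + 1)) f ≠ 0 ∧
    (PowerSeries.X : CTS) ^ (d + 1) ∣ deformSubst φ (sVar * PowerSeries.X ^ (d + 1)) f ∧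
    PowerSeries.map PowerSeries.constantCoeff
      (deformSubst φ (sVar * PowerSeries.X ^ (d + 1)) f) = 0 ∧
    ∃ Ψ₂ : CTS, (PowerSeries.X : CTS) ∣ Ψ₂ ∧
      PowerSeries.map PowerSeries.constantCoeff Ψ₂ = 0 ∧
      embT ψ₁ * Ψ₂ = deformSubst φ (sVar * PowerSeries.X ^ (d + 1)) f := by
  have hne : deformSubst φ (sVar * X ^ (d + 1)) f ≠ 0 := fun hF =>
    hz (by rw [← coeff_coeff_deformSubst hφ d m f, hF, map_zero, map_zero])
  have hdvd : (X : CTS) ^ (d + 1) ∣ deformSubst φ (sVar * X ^ (d + 1)) f := by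
    have h := X_pow_dvd_deformSubst_sub (dvd_mul_left (X ^ (d + 1)) sVar) φ f
    rwa [hfφ, embT, map_zero, sub_zero] at h
  have hres : map constantCoeff (deformSubst φ (sVar * X ^ (d + 1)) f) = 0 := by
    rw [map_constantCoeff_deformSubst (by rw [map_mul, map_constantCoeff_sVar, zero_mul]), hfφ]
  exact ⟨hne, hdvd, hres, exists_embT_mul_eq hd hdvd hres⟩

/-- Deformation step in the proof of Theorem 1, case `f(φ) = 0`.
Let `f ∈ ℂ[[z_0,…,z_n]]` have order `m ≥ 2` with `z_0^m` occurring with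
nonzero coefficient; let `φ_j ∈ ℂ[[t]]` have zero constant term with
`f(φ) = 0`, and let `ψ_1 ∈ ℂ[[t]]` be nonzero of zero constant term and
order `d`.  Set `F(t,s) := f(φ_0(t) + s·t^(d+1), φ_1(t), …, φ_n(t))`.
Then `F ≠ 0`, `t^(d+1) ∣ F`, `F(t,0) = 0`, and `F = ψ_1·Ψ_2` for some
`Ψ_2 ∈ ℂ[[t,s]]` divisible by `t` with `Ψ_2(t,0) = 0`. -/
theorem stmt6 (n : ℕ) (f : MvPowerSeries (Fin (n + 1)) ℂ) (m : ℕ) (hm : 2 ≤ m)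
    (hord : ∀ d : Fin (n + 1) →₀ ℕ,
      (d.sum fun _ e => e) < m → MvPowerSeries.coeff d f = 0)
    (hz : MvPowerSeries.coeff (Finsupp.single 0 m) f ≠ 0)
    (φ : Fin (n + 1) → PowerSeries ℂ)
    (hφ : ∀ j, PowerSeries.constantCoeff (φ j) = 0)
    (hfφ : substArc φ f = 0)
    (ψ₁ : PowerSeries ℂ) (hψne : ψ₁ ≠ 0)
    (hψ0 : PowerSeries.constantCoeff ψ₁ = 0)
    (d : ℕ) (hd : ψ₁.order = d) :
    deformSubst φ (sVar * PowerSeries.X ^ (d + 1)) f ≠ 0 ∧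
    (PowerSeries.X : CTS) ^ (d + 1) ∣ deformSubst φ (sVar * PowerSeries.X ^ (d + 1)) f ∧
    PowerSeries.map PowerSeries.constantCoeff
      (deformSubst φ (sVar * PowerSeries.X ^ (d + 1)) f) = 0 ∧
    ∃ Ψ₂ : CTS, (PowerSeries.X : CTS) ∣ Ψ₂ ∧
      PowerSeries.map PowerSeries.constantCoeff Ψ₂ = 0 ∧
      embT ψ₁ * Ψ₂ = deformSubst φ (sVar * PowerSeries.X ^ (d + 1)) f :=
  stmt6_general n f m hz φ hφ hfφ ψ₁ d hd
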